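/- arXiv:1904.00322 — 4 statements merged into one kernel-verified Lean document; each statement's English description precedes it below -/
import Mathlib

section
/- Let {U_n : n < ω} be a countable family of ultrafilters on a set S and F = ⋂_n U_n. If there exists a countable partition A of S such that no member of A belongs to any U_n, then for every F-positive set X, the filter F ↾ X generated by F and X is not countably complete (i.e., there is a countable subfamily of F ↾ X whose intersection is not in F ↾ X). -/
/-! The complements `(A m)ᶜ` of an enumeration of the partition lie in every `U n`, hence in
`F ↾ X`, but their intersection is empty, so it lies in `F ↾ X` only if `Xᶜ ∈ F`. -/

open Set

theorem Set.Countable.exists_seq_mem_iUnion_eq_univ {S : Type*} [Nonempty S]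
    {𝒜 : Set (Set S)} (hc : 𝒜.Countable) (hcov : ⋃₀ 𝒜 = univ) :
    ∃ A : ℕ → Set S, (∀ m, A m ∈ 𝒜) ∧ ⋃ m, A m = univ := by
  have hne : 𝒜.Nonempty := by
    by_contra h
    rw [not_nonempty_iff_eq_empty.1 h, sUnion_empty] at hcov
    exact empty_ne_univ hcov
  obtain ⟨A, rfl⟩ := hc.exists_eq_range hne
  exact ⟨A, mem_range_self, by rwa [sUnion_range] at hcov⟩

theorem stmt7_general {S : Type*} (U : ℕ → Ultrafilter S) (𝒜 : Set (Set S))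
    (hc : 𝒜.Countable) (hcov : ⋃₀ 𝒜 = Set.univ)
    (hA : ∀ A ∈ 𝒜, ∀ n, A ∉ U n) :
    ∀ X : Set S, (¬ ∀ n, Xᶜ ∈ U n) →
      ∃ C : ℕ → Set S, (∀ m, ∀ n, C m ∪ Xᶜ ∈ U n) ∧ ¬ ∀ n, (⋂ m, C m) ∪ Xᶜ ∈ U n := by
  intro X hX
  have : Nonempty S := Filter.nonempty_of_neBot (U 0 : Filter S)
  obtain ⟨A, hA𝒜, hAcov⟩ := hc.exists_seq_mem_iUnion_eq_univ hcov
  have hinter : ⋂ m, (A m)ᶜ = ∅ := by rw [← compl_iUnion, hAcov, compl_univ]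
  refine ⟨fun m => (A m)ᶜ, fun m n => ?_, by simpa only [hinter, empty_union] using hX⟩
  exact Filter.mem_of_superset (Ultrafilter.compl_mem_iff_notMem.2 (hA _ (hA𝒜 m) n))
    subset_union_left

/-- If there is a countable partition of `S` no member of which belongs to any `U n`,
then for every `F`-positive `X` (where `F = ⋂ n, U n`), the filter `F ↾ X` is not
countably complete. -/
theorem stmt7 {S : Type*} (U : ℕ → Ultrafilter S) (𝒜 : Set (Set S))
    (hc : 𝒜.Countable) (hdisj : 𝒜.PairwiseDisjoint id) (hcov : ⋃₀ 𝒜 = Set.univ)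
    (hA : ∀ A ∈ 𝒜, ∀ n, A ∉ U n) :
    ∀ X : Set S, (¬ ∀ n, Xᶜ ∈ U n) →
      ∃ C : ℕ → Set S, (∀ m, ∀ n, C m ∪ Xᶜ ∈ U n) ∧ ¬ ∀ n, (⋂ m, C m) ∪ Xᶜ ∈ U n :=
  stmt7_general U 𝒜 hc hcov hA
end

section
/- Let {U_n : n < ω} be a countable family of ultrafilters on an uncountable set S, and let F = ⋂_n U_n. If for every F-positive set X the filter F ↾ X is not countably complete, then there is a countable partition A of S such that A ∉ U_n for every A ∈ A and n < ω. -/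
/-!
Call a set null if it lies in no `U n`. It suffices to cover `S` by countably many null sets,
since the fibres of a choice of covering set then form the partition. If no such cover exists,
the countably complete filter `G` generated by `F = ⋂ n, U n` is proper. Intersecting, over
all `n` with `G ⊄ U n`, a set of `G` missing from `U n` gives an `F`-positive `R ∈ G` with
`G ⊆ U n` whenever `R ∈ U n`. Take `C` witnessing that `F ↾ R` is not countably complete:
`(⋂ m, C m) ∪ Rᶜ` lies in `G` but misses some `U n`, and this `U n` contains `R`, hence `G`.
-/

open Set Filter

theorem Set.Countable.exists_isPartition_subordinate {α : Type*} {𝒮 : Set (Set α)}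
    (h𝒮 : 𝒮.Countable) (hcover : ⋃₀ 𝒮 = univ) :
    ∃ 𝒜 : Set (Set α), 𝒜.Countable ∧ Setoid.IsPartition 𝒜 ∧ ∀ A ∈ 𝒜, ∃ s ∈ 𝒮, A ⊆ s := by
  have hmem (x : α) : ∃ s : 𝒮, x ∈ (s : Set α) := by
    obtain ⟨s, hs, hx⟩ := mem_sUnion.1 (hcover ▸ mem_univ x)
    exact ⟨⟨s, hs⟩, hx⟩
  choose f hf using hmem
  have : Countable 𝒮 := h𝒮.to_subtype
  refine ⟨(Setoid.ker f).classes, (countable_range _).mono (Setoid.classes_ker_subset_fiber_set f),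
    Setoid.isPartition_classes _, ?_⟩
  rintro A ⟨y, rfl⟩
  exact ⟨f y, (f y).2, fun x (hx : f x = f y) => hx ▸ hf x⟩

namespace Ultrafilter

variable {S : Type*}

theorem exists_mem_forall_mem_imp_le (G : Filter S) [CountableInterFilter G]
    (U : ℕ → Ultrafilter S) : ∃ R ∈ G, ∀ n, R ∈ U n → ↑(U n) ≤ G := by
  classical
  have hwitness (n : ℕ) : ∃ R ∈ G, R ∈ U n → ↑(U n) ≤ G := by
    by_cases hn : ↑(U n) ≤ G
    · exact ⟨univ, univ_mem, fun _ => hn⟩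
    · obtain ⟨R, hRG, hRU⟩ := Filter.not_le.1 hn
      exact ⟨R, hRG, fun hR => absurd hR hRU⟩
  choose R hRG hR using hwitness
  exact ⟨⋂ n, R n, countable_iInter_mem.2 hRG,
    fun n hn => hR n (mem_of_superset hn (iInter_subset R n))⟩

theorem countableGenerate_iSup_eq_bot (U : ℕ → Ultrafilter S)
    (h : ∀ X : Set S, (¬ ∀ n, Xᶜ ∈ U n) →
      ∃ C : ℕ → Set S, (∀ m, ∀ n, C m ∪ Xᶜ ∈ U n) ∧ ¬ ∀ n, (⋂ m, C m) ∪ Xᶜ ∈ U n) :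
    countableGenerate (⨆ n, (U n : Filter S)).sets = ⊥ := by
  set G := countableGenerate (⨆ n, (U n : Filter S)).sets
  by_contra hG
  have : G.NeBot := ⟨hG⟩
  have hFG (Y : Set S) (hY : ∀ n, Y ∈ U n) : Y ∈ G :=
    (countableGenerate_isGreatest _).1.2 (mem_iSup.2 hY)
  obtain ⟨R, hRG, hR⟩ := exists_mem_forall_mem_imp_le G U
  obtain ⟨C, hC, hCR⟩ := h R fun hRc => compl_notMem hRG (hFG _ hRc)
  obtain ⟨n, hn⟩ := not_forall.1 hCR
  have hRn : R ∈ U n := by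
    by_contra hRn
    exact hn (mem_of_superset (compl_mem_iff_notMem.2 hRn) subset_union_right)
  have hCG : (⋂ m, C m) ∪ Rᶜ ∈ G := by
    rw [iInter_union]
    exact countable_iInter_mem.2 fun m => hFG _ (hC m)
  exact hn (hR n hRn hCG)

end Ultrafilter

theorem stmt8_general {S : Type*} (U : ℕ → Ultrafilter S)
    (h : ∀ X : Set S, (¬ ∀ n, Xᶜ ∈ U n) →
      ∃ C : ℕ → Set S, (∀ m, ∀ n, C m ∪ Xᶜ ∈ U n) ∧ ¬ ∀ n, (⋂ m, C m) ∪ Xᶜ ∈ U n) :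
    ∃ 𝒜 : Set (Set S), 𝒜.Countable ∧ 𝒜.PairwiseDisjoint id ∧ ⋃₀ 𝒜 = Set.univ ∧
      (∀ A ∈ 𝒜, A.Nonempty) ∧ ∀ A ∈ 𝒜, ∀ n, A ∉ U n := by
  have hempty : ∅ ∈ countableGenerate (⨆ n, (U n : Filter S)).sets := by
    rw [Ultrafilter.countableGenerate_iSup_eq_bot U h]
    exact mem_bot
  obtain ⟨𝒯, h𝒯F, h𝒯, h𝒯empty⟩ := mem_countableGenerate_iff.1 hempty
  have hcover : ⋃₀ (compl '' 𝒯) = univ := by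
    rw [← compl_sInter, subset_empty_iff.1 h𝒯empty, compl_empty]
  obtain ⟨𝒜, h𝒜, h𝒜part, h𝒜sub⟩ := (h𝒯.image compl).exists_isPartition_subordinate hcover
  refine ⟨𝒜, h𝒜, h𝒜part.pairwiseDisjoint, h𝒜part.sUnion_eq_univ,
    fun A hA => Setoid.nonempty_of_mem_partition h𝒜part hA, ?_⟩
  rintro A hA n hAn
  obtain ⟨_, ⟨T, hT, rfl⟩, hAT⟩ := h𝒜sub A hA
  exact Ultrafilter.compl_notMem_iff.2 (mem_iSup.1 (h𝒯F hT) n) (mem_of_superset hAn hAT)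

/-- If `S` is uncountable and for every `F`-positive `X` (where `F = ⋂ n, U n`) the filter
`F ↾ X` is not countably complete, then there is a countable partition of `S` none of
whose members belongs to any `U n`. -/
theorem stmt8 {S : Type*} [Uncountable S] (U : ℕ → Ultrafilter S)
    (h : ∀ X : Set S, (¬ ∀ n, Xᶜ ∈ U n) →
      ∃ C : ℕ → Set S, (∀ m, ∀ n, C m ∪ Xᶜ ∈ U n) ∧ ¬ ∀ n, (⋂ m, C m) ∪ Xᶜ ∈ U n) :
    ∃ 𝒜 : Set (Set S), 𝒜.Countable ∧ 𝒜.PairwiseDisjoint id ∧ ⋃₀ 𝒜 = Set.univ ∧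
      (∀ A ∈ 𝒜, A.Nonempty) ∧ ∀ A ∈ 𝒜, ∀ n, A ∉ U n :=
  stmt8_general U h
end

section
/- Let F be a countably complete filter on S such that every uncountable family of F-positive sets contains two members whose intersection is F-positive (ω₁-saturation). Suppose moreover F is (2^ℵ₀)⁺-complete. Then there exists an F-positive set Y such that F ↾ Y is an ultrafilter. (Tarski's theorem.) -/
/-!
If no positive `Y` makes `F ↾ Y` an ultrafilter, every positive set splits into two positive
halves. Splitting every node and intersecting at limits gives a binary tree of height `ω₁` whose
levels partition `S`. A level of countable height has at most `2 ^ ℵ₀` nodes, so by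
`(2 ^ ℵ₀)⁺`-completeness almost every point lies in a positive node at each of these `ℵ₁ ≤ 2 ^ ℵ₀`
levels. Along the branch of such a point, the halves cut off at the successive levels are
`ℵ₁` pairwise disjoint positive sets, contradicting `ω₁`-saturation.
-/

open Set Cardinal Function

universe u

namespace Tarski

section Tree

variable {S ι : Type u} (split : Set S → Set S)

def cell (Y : Set S) (x : S) : Set S :=
  Y ∩ {y | y ∈ split Y ↔ x ∈ split Y}

lemma mem_cell_self {Y : Set S} {x : S} (hx : x ∈ Y) : x ∈ cell split Y x :=
  ⟨hx, Iff.rfl⟩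

variable [LinearOrder ι] [WellFoundedLT ι]

/-- The node at level `i` containing `x` of the tree obtained by cutting every node `Y` along
`split Y`; indexing nodes by their points avoids building the tree as a separate object. -/
noncomputable def node : ι → S → Set S :=
  wellFounded_lt.fix fun i ih x => ⋂ j : Iio i, cell split (ih j j.2 x) x

lemma node_eq_iInter (i : ι) (x : S) :
    node split i x = ⋂ j : Iio i, cell split (node split j.1 x) x := by
  rw [node, WellFounded.fix_eq]

lemma node_subset_cell {i j : ι} (h : j < i) (x : S) :
    node split i x ⊆ cell split (node split j x) x := by
  rw [node_eq_iInter]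
  exact iInter_subset (fun k : Iio i => cell split (node split k.1 x) x) ⟨j, h⟩

lemma mem_node_self (i : ι) (x : S) : x ∈ node split i x := by
  induction i using WellFoundedLT.induction with
  | _ i ih =>
    rw [node_eq_iInter]
    exact mem_iInter.2 fun j => mem_cell_self split (ih j j.2)

lemma node_eq_of_forall_lt {i : ι} {x y : S}
    (h : ∀ j < i, (x ∈ split (node split j x) ↔ y ∈ split (node split j y))) :
    node split i x = node split i y := by
  induction i using WellFoundedLT.induction with
  | _ i ih =>
    rw [node_eq_iInter, node_eq_iInter]
    refine iInter_congr fun j => ?_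
    have hj : node split j.1 x = node split j.1 y := ih j j.2 fun k hk => h k (hk.trans j.2)
    have hside := h j j.2
    rw [hj] at hside
    simp only [cell, hj, hside]

/-- A node is determined by the sides of the cuts `x` took below it. -/
lemma mk_range_node_le (i : ι) : #(range (node split i)) ≤ 2 ^ #(Iio i) := by
  let sides : S → Iio i → Prop := fun x j => x ∈ split (node split j.1 x)
  have hfac : (node split i).FactorsThrough sides := fun x y hxy =>
    node_eq_of_forall_lt split fun j hj => Iff.of_eq (congrFun hxy ⟨j, hj⟩)
  calc #(range (node split i))
      ≤ #(range (Function.extend sides (node split i) fun _ => ∅)) :=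
        mk_le_mk_of_subset (range_subset_iff.2 fun x => ⟨sides x, hfac.extend_apply _ x⟩)
    _ ≤ #(Iio i → Prop) := mk_range_le
    _ = 2 ^ #(Iio i) := by simp

lemma pairwise_disjoint_sdiff_cell_node (x : S) :
    Pairwise (Disjoint on fun i : ι => node split i x \ cell split (node split i x) x) :=
  (pairwise_disjoint_on _).2 fun _ _ hij =>
    disjoint_sdiff_left.mono_right (sdiff_subset.trans (node_subset_cell split hij x))

end Tree

section Filter

variable {S : Type} (F : Filter S)

lemma compl_sdiff_cell_notMem (split : Set S → Set S) {Y : Set S} (x : S)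
    (h : split Y ∪ Yᶜ ∉ F ∧ (split Y)ᶜ ∪ Yᶜ ∉ F) : (Y \ cell split Y x)ᶜ ∉ F := by
  by_cases hx : x ∈ split Y
  · convert h.1 using 2
    ext y; grind [cell]
  · convert h.2 using 2
    ext y; grind [cell]

lemma compl_sUnion_mem_of_mk_le
    (hcomp : ∀ (ι : Type) (C : ι → Set S), Cardinal.mk ι ≤ 2 ^ Cardinal.aleph0 →
      (∀ i, C i ∈ F) → (⋂ i, C i) ∈ F)
    {𝒩 : Set (Set S)} (h𝒩 : #𝒩 ≤ 2 ^ ℵ₀) (hnull : ∀ A ∈ 𝒩, Aᶜ ∈ F) : (⋃₀ 𝒩)ᶜ ∈ F := by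
  rw [sUnion_eq_iUnion, compl_iUnion]
  exact hcomp _ _ h𝒩 fun A => hnull A A.2

/-- A level of countable height has at most `2 ^ ℵ₀` nodes, so its null nodes cover a null
set. -/
lemma eventually_compl_node_notMem
    (hcomp : ∀ (ι : Type) (C : ι → Set S), Cardinal.mk ι ≤ 2 ^ Cardinal.aleph0 →
      (∀ i, C i ∈ F) → (⋂ i, C i) ∈ F)
    (split : Set S → Set S) {ι : Type} [LinearOrder ι] [WellFoundedLT ι] {i : ι}
    (hi : #(Iio i) ≤ ℵ₀) : ∀ᶠ x in F, (node split i x)ᶜ ∉ F := by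
  have hcard : #{A ∈ range (node split i) | Aᶜ ∈ F} ≤ 2 ^ ℵ₀ :=
    calc #{A ∈ range (node split i) | Aᶜ ∈ F}
        ≤ #(range (node split i)) := mk_le_mk_of_subset (sep_subset _ _)
      _ ≤ 2 ^ #(Iio i) := mk_range_node_le split i
      _ ≤ 2 ^ ℵ₀ := power_le_power_left two_ne_zero hi
  filter_upwards [compl_sUnion_mem_of_mk_le F hcomp hcard fun A hA => hA.2] with x hx hnull
  exact hx ⟨_, ⟨⟨x, rfl⟩, hnull⟩, mem_node_self split i x⟩

lemma countable_of_pairwise_disjoint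
    (hsat : ∀ 𝒜 : Set (Set S), ¬ 𝒜.Countable → (∀ X ∈ 𝒜, Xᶜ ∉ F) →
      ∃ X ∈ 𝒜, ∃ Y ∈ 𝒜, X ≠ Y ∧ (X ∩ Y)ᶜ ∉ F)
    {ι : Type*} {W : ι → Set S} (hpos : ∀ i, (W i)ᶜ ∉ F) (hdisj : Pairwise (Disjoint on W)) :
    Countable ι := by
  have hne : ∀ i, (W i).Nonempty := fun i =>
    nonempty_iff_ne_empty.2 fun h => hpos i (by simp [h])
  have hinj : W.Injective := fun i j hij => by
    by_contra hij'
    have hempty := (hdisj hij').inter_eq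
    rw [hij, inter_self] at hempty
    exact (hne j).ne_empty hempty
  by_contra hι
  obtain ⟨_, ⟨i, rfl⟩, _, ⟨j, rfl⟩, hWij, hpos'⟩ := hsat (range W)
    (fun h => hι (have := h.to_subtype; (Equiv.ofInjective W hinj).injective.countable))
    (forall_mem_range.2 hpos)
  rw [(hdisj fun hij => hWij (congrArg W hij)).inter_eq, compl_empty] at hpos'
  exact hpos' Filter.univ_mem

end Filter

end Tarski

open Tarski

theorem stmt11_general {S : Type} (F : Filter S) [F.NeBot]
    (hsat : ∀ 𝒜 : Set (Set S), ¬ 𝒜.Countable → (∀ X ∈ 𝒜, Xᶜ ∉ F) →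
      ∃ X ∈ 𝒜, ∃ Y ∈ 𝒜, X ≠ Y ∧ (X ∩ Y)ᶜ ∉ F)
    (hcomp : ∀ (ι : Type) (C : ι → Set S), Cardinal.mk ι ≤ 2 ^ Cardinal.aleph0 →
      (∀ i, C i ∈ F) → (⋂ i, C i) ∈ F) :
    ∃ Y : Set S, Yᶜ ∉ F ∧ ∀ Z : Set S, Z ∪ Yᶜ ∈ F ∨ Zᶜ ∪ Yᶜ ∈ F := by
  by_contra! hatomless
  choose! split hsplit using hatomless
  let ι := (ℵ₁ : Cardinal.{0}).ord.ToType
  have hι : #ι = ℵ₁ := by rw [mk_toType, card_ord]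
  have hlevel : ∀ i : ι, #(Iio i) ≤ ℵ₀ := fun i => by
    simpa [hι] using mk_Iio_lt i (by rw [hι, Ordinal.type_toType])
  have hbranch : (⋂ i : ι, {x | (node split i x)ᶜ ∉ F}) ∈ F :=
    hcomp ι _ (hι ▸ aleph_one_le_continuum) fun i =>
      eventually_compl_node_notMem F hcomp split (hlevel i)
  obtain ⟨x, hx⟩ := F.nonempty_of_mem hbranch
  have hcount : Countable ι := countable_of_pairwise_disjoint F hsat
    (fun i => compl_sdiff_cell_notMem F split x (hsplit _ (mem_iInter.1 hx i)))
    (pairwise_disjoint_sdiff_cell_node split x)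
  exact aleph0_lt_aleph_one.not_ge (hι ▸ mk_le_aleph0_iff.2 hcount)

/-- Tarski's theorem: a proper, countably complete, `ω₁`-saturated and `(2^ℵ₀)⁺`-complete
filter `F` on an uncountable set `S` has an `F`-positive set `Y` such that `F ↾ Y` is an
ultrafilter. -/
theorem stmt11 {S : Type} [Uncountable S] (F : Filter S) [F.NeBot]
    (hcc : ∀ C : ℕ → Set S, (∀ n, C n ∈ F) → (⋂ n, C n) ∈ F)
    (hsat : ∀ 𝒜 : Set (Set S), ¬ 𝒜.Countable → (∀ X ∈ 𝒜, Xᶜ ∉ F) →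
      ∃ X ∈ 𝒜, ∃ Y ∈ 𝒜, X ≠ Y ∧ (X ∩ Y)ᶜ ∉ F)
    (hcomp : ∀ (ι : Type) (C : ι → Set S), Cardinal.mk ι ≤ 2 ^ Cardinal.aleph0 →
      (∀ i, C i ∈ F) → (⋂ i, C i) ∈ F) :
    ∃ Y : Set S, Yᶜ ∉ F ∧ ∀ Z : Set S, Z ∪ Yᶜ ∈ F ∨ Zᶜ ∪ Yᶜ ∈ F :=
  stmt11_general F hsat hcomp
end

section
/- Let κ ≤ λ be uncountable cardinals and let E be a collection of fewer than κ countable partitions of P_κ(λ), with κ regular (or more generally: assuming one can find, for any <κ-many partitions and any finitely many elements of λ, a point of P_κ(λ) in prescribed cells containing those elements). Then there is a fine ultrafilter U on P_κ(λ) such that for each partition A ∈ E, some member of A belongs to U. Consequently, the sets S^A = {U fine ultrafilter : no member of A is in U}, for A ∈ E, do not cover the space of fine ultrafilters. -/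
/-!
Let `ℱ` be the κ-complete filter on `P_κ(A)` generated by the fine sets `{x | a ∈ x}`; it is
proper because fewer than κ elements of `A` form a point of `P_κ(A)`. Fix for every point `y` a
cell of each partition containing it. For a finite `s ⊆ E` there are only countably many
patterns of cells along `s`, so by countable completeness `ℱ`-almost every `y` has an
`ℱ`-positive pattern. As `E` has fewer than κ finite subsets, κ-completeness yields one point
`x₀` whose pattern is `ℱ`-positive along every finite `s`: the chosen cells of `x₀` together
with `ℱ` have the finite intersection property, and any ultrafilter containing them works.
-/

open Cardinal Filter Set

universe u

namespace Cardinal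

theorem mk_finset_lt_of_aleph0_lt {ι : Type u} {κ : Cardinal.{u}} (hκ : ℵ₀ < κ) (hι : #ι < κ) :
    #(Finset ι) < κ := by
  rcases finite_or_infinite ι with _ | _
  · exact (lt_aleph0_of_finite (Finset ι)).trans hκ
  · rwa [mk_finset_of_infinite]

end Cardinal

namespace Filter

variable {X : Type u} {l : Filter X}

theorem eventually_frequently_eq [CountableInterFilter l] {T : Type*} [Countable T]
    (p : X → T) : ∀ᶠ y in l, ∃ᶠ x in l, p x = p y := by
  have hnull : ∀ᶠ y in l, ∀ t, (∀ᶠ x in l, p x ≠ t) → p y ≠ t :=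
    eventually_countable_forall.2 fun t => by
      by_cases ht : ∀ᶠ x in l, p x ≠ t
      · exact ht.mono fun y hy _ => hy
      · exact Eventually.of_forall fun _ h => absurd h ht
  exact hnull.mono fun y hy hfreq => hy (p y) hfreq rfl

theorem exists_ultrafilter_le_forall_mem {ι : Type*} (c : ι → Set X)
    (hc : ∀ s : Finset ι, ∃ᶠ x in l, ∀ i ∈ s, x ∈ c i) :
    ∃ U : Ultrafilter X, ↑U ≤ l ∧ ∀ i, c i ∈ U := by
  let F : Finset ι → Filter X := fun s => l ⊓ 𝓟 {x | ∀ i ∈ s, x ∈ c i}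
  have hF : Antitone F := fun s t hst =>
    inf_le_inf_left _ (principal_mono.2 fun x hx i hi => hx i (hst hi))
  have : NeBot (⨅ s, F s) :=
    iInf_neBot_of_directed' hF.directed_ge fun s => frequently_iff_neBot.1 (hc s)
  obtain ⟨U, hU⟩ := exists_ultrafilter_le (⨅ s, F s)
  refine ⟨U, hU.trans ((iInf_le F ∅).trans inf_le_left), fun i => ?_⟩
  refine hU.trans (iInf_le F {i}) (mem_inf_of_right (mem_principal.2 fun x hx => ?_))
  exact hx i (Finset.mem_singleton_self i)

theorem exists_ultrafilter_le_forall_exists_mem {ι : Type u} {κ : Cardinal.{u}}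
    [NeBot l] [CardinalInterFilter l κ] (hκ : ℵ₀ < κ) (hι : #ι < κ)
    (𝒜 : ι → Set (Set X)) (h𝒜c : ∀ i, (𝒜 i).Countable) (h𝒜 : ∀ i, ⋃₀ 𝒜 i = Set.univ) :
    ∃ U : Ultrafilter X, ↑U ≤ l ∧ ∀ i, ∃ B ∈ 𝒜 i, B ∈ U := by
  have := CardinalInterFilter.toCountableInterFilter l hκ
  have := fun i => (h𝒜c i).to_subtype
  have hcover (i : ι) (y : X) : ∃ B : 𝒜 i, y ∈ B.1 := by
    obtain ⟨B, hB, hyB⟩ := mem_sUnion.1 (h𝒜 i ▸ mem_univ y)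
    exact ⟨⟨B, hB⟩, hyB⟩
  choose cell mem_cell using hcover
  let pattern (s : Finset ι) (y : X) : (i : s) → 𝒜 i := fun i => cell i y
  have hgood : ∀ᶠ y in l, ∀ s, ∃ᶠ x in l, pattern s x = pattern s y :=
    (eventually_cardinal_forall (Cardinal.mk_finset_lt_of_aleph0_lt hκ hι)).2 fun s =>
      eventually_frequently_eq (pattern s)
  obtain ⟨x₀, hx₀⟩ := hgood.exists
  obtain ⟨U, hUl, hU⟩ := exists_ultrafilter_le_forall_mem (l := l) (fun i => (cell i x₀).1)
    fun s => (hx₀ s).mono fun x hx i hi => by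
      simpa [pattern, ← congrFun hx ⟨i, hi⟩] using mem_cell i x
  exact ⟨U, hUl, fun i => ⟨_, (cell i x₀).2, hU i⟩⟩

end Filter

def fineFilter (κ : Cardinal.{u}) (hκ : κ.IsRegular) (A : Type u) :
    Filter {x : Set A // #x < κ} :=
  cardinalGenerate (range fun a => {x | a ∈ x.1}) (hκ.nat_lt 2)

namespace fineFilter

variable {κ : Cardinal.{u}} (hκ : κ.IsRegular) {A : Type u}

instance : CardinalInterFilter (fineFilter κ hκ A) κ :=
  cardinalInter_ofCardinalGenerate _ _

theorem setOf_mem_mem (a : A) : {x | a ∈ x.1} ∈ fineFilter κ hκ A :=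
  (mem_cardinalGenerate_iff (hreg := hκ)).2
    ⟨{{x | a ∈ x.1}}, singleton_subset_iff.2 (mem_range_self a), by simpa using hκ.nat_lt 1,
      by simp⟩

/-- Fewer than κ generators `{x | a ∈ x}` all contain the set of their `a`'s, which is small. -/
instance : NeBot (fineFilter κ hκ A) := by
  refine ⟨fun hbot => ?_⟩
  obtain ⟨S, hSg, hSκ, hS⟩ :=
    (mem_cardinalGenerate_iff (hreg := hκ)).1 (empty_mem_iff_bot.2 hbot)
  choose pt hpt using fun s : S => hSg s.2
  have hsmall : #(range pt) < κ := mk_range_le.trans_lt hSκ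
  refine hS (a := ⟨range pt, hsmall⟩) (mem_sInter.2 fun s hs => ?_)
  rw [← show {x | pt ⟨s, hs⟩ ∈ x.1} = s from hpt ⟨s, hs⟩]
  exact mem_range_self (f := pt) ⟨s, hs⟩

end fineFilter

theorem stmt19_general (κ : Cardinal) (hκ : Cardinal.aleph0 < κ) (hreg : κ.IsRegular)
    (A : Type)
    (E : Set (Set (Set {x : Set A // Cardinal.mk ↥x < κ})))
    (hE : Cardinal.mk ↥E < κ)
    (hpart : ∀ 𝒜 ∈ E, 𝒜.Countable ∧ 𝒜.PairwiseDisjoint id ∧ ⋃₀ 𝒜 = Set.univ) :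
    ∃ U : Ultrafilter {x : Set A // Cardinal.mk ↥x < κ},
      (∀ a : A, {x : {x : Set A // Cardinal.mk ↥x < κ} | a ∈ x.1} ∈ U) ∧
      ∀ 𝒜 ∈ E, ∃ B ∈ 𝒜, B ∈ U := by
  obtain ⟨U, hU, hcell⟩ := exists_ultrafilter_le_forall_exists_mem (l := fineFilter κ hreg A) hκ hE
    (fun 𝒜 : E => 𝒜.1) (fun 𝒜 => (hpart 𝒜 𝒜.2).1) (fun 𝒜 => (hpart 𝒜 𝒜.2).2.2)
  exact ⟨U, fun a => hU (fineFilter.setOf_mem_mem hreg a), fun 𝒜 h𝒜 => hcell ⟨𝒜, h𝒜⟩⟩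

/-- Usuba's covering fact: if `κ ≤ λ` are uncountable cardinals with `κ` regular, and `E`
is a family of fewer than `κ` countable partitions of `P_κ(λ)`, then there is a fine
ultrafilter on `P_κ(λ)` containing a cell of each partition in `E`; hence the sets `S^𝒜`
for `𝒜 ∈ E` do not cover the space of fine ultrafilters. -/
theorem stmt19 (κ l : Cardinal) (hκ : Cardinal.aleph0 < κ) (hreg : κ.IsRegular)
    (hκl : κ ≤ l) (A : Type) (hA : Cardinal.mk A = l)
    (E : Set (Set (Set {x : Set A // Cardinal.mk ↥x < κ})))
    (hE : Cardinal.mk ↥E < κ)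
    (hpart : ∀ 𝒜 ∈ E, 𝒜.Countable ∧ 𝒜.PairwiseDisjoint id ∧ ⋃₀ 𝒜 = Set.univ) :
    ∃ U : Ultrafilter {x : Set A // Cardinal.mk ↥x < κ},
      (∀ a : A, {x : {x : Set A // Cardinal.mk ↥x < κ} | a ∈ x.1} ∈ U) ∧
      ∀ 𝒜 ∈ E, ∃ B ∈ 𝒜, B ∈ U :=
  stmt19_general κ hκ hreg A E hE hpart
end
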